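/- arXiv:1408.1903 — 3 statements merged into one kernel-verified Lean document; each statement's English description precedes it below -/
import Mathlib

section
/- Let M be a Wall form with stable rank r̄(M) ≥ 2 + d, where d = d(H). Then there exists at least one Wall form morphism W → M (equivalently, the complex L(M) is non-empty). -/
/-!
Framework: `H`-pairs and Wall forms, following N. Perlmutter,
"Homological stability for the moduli spaces of products of spheres".

A form parameter `(G, ∂, π, ε)` is recorded together with the two
compatibility identities `∂(ε•h) = ∂(h)` and `π(∂(h)) = h + ε•h`, which hold
in the geometric situation considered in the paper and which are exactly the
conditions needed for the standard Wall forms `W^g` to exist.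
-/

section HPairs

/-- An `H`-pair: a pair of abelian groups together with a ℤ-bilinear
(i.e. biadditive) map `τ : M₋ × H → M₊`. -/
structure HPair (H : Type) [AddCommGroup H] where
  Neg : Type
  Pos : Type
  [negGrp : AddCommGroup Neg]
  [posGrp : AddCommGroup Pos]
  tau : Neg →+ H →+ Pos

attribute [instance] HPair.negGrp HPair.posGrp

variable {H : Type} [AddCommGroup H]

/-- An `H`-map of `H`-pairs. -/
structure HPairHom (M N : HPair H) where
  neg : M.Neg →+ N.Neg
  pos : M.Pos →+ N.Pos
  comm : ∀ x h, pos (M.tau x h) = N.tau (neg x) h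

/-- An isomorphism of `H`-pairs. -/
structure HPairIso (M N : HPair H) where
  toHom : HPairHom M N
  invHom : HPairHom N M
  left_neg : ∀ x, invHom.neg (toHom.neg x) = x
  right_neg : ∀ x, toHom.neg (invHom.neg x) = x
  left_pos : ∀ y, invHom.pos (toHom.pos y) = y
  right_pos : ∀ y, toHom.pos (invHom.pos y) = y

/-- An `H`-pair is finitely generated if both component groups are. -/
def HPair.FG (M : HPair H) : Prop :=
  AddGroup.FG M.Neg ∧ AddGroup.FG M.Pos

/-- The componentwise direct sum of two `H`-pairs. -/
@[reducible] def HPair.sum (M N : HPair H) : HPair H where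
  Neg := M.Neg × N.Neg
  Pos := M.Pos × N.Pos
  tau :=
    { toFun := fun x => (M.tau x.1).prod (N.tau x.2)
      map_zero' := by
        refine AddMonoidHom.ext fun h => ?_
        simp [Prod.ext_iff]
      map_add' := by
        intro x y
        refine AddMonoidHom.ext fun h => ?_
        simp [Prod.ext_iff] }

/-- The left inclusion `M → M ⊕ N`. -/
def HPairHom.inl (M N : HPair H) : HPairHom M (M.sum N) where
  neg := AddMonoidHom.inl M.Neg N.Neg
  pos := AddMonoidHom.inl M.Pos N.Pos
  comm := by
    intro x h
    simp [HPair.sum, Prod.ext_iff]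

/-- The right inclusion `N → M ⊕ N`. -/
def HPairHom.inr (M N : HPair H) : HPairHom N (M.sum N) where
  neg := AddMonoidHom.inr M.Neg N.Neg
  pos := AddMonoidHom.inr M.Pos N.Pos
  comm := by
    intro x h
    simp [HPair.sum, Prod.ext_iff]

/-- The `H`-pair `P⁰`, with `P⁰₋ = 0`, `P⁰₊ = ℤ` and `τ = 0`. -/
def P0 (H : Type) [AddCommGroup H] : HPair H where
  Neg := PUnit
  Pos := ℤ
  tau := 0

/-- The `H`-pair `P¹`, with `P¹₋ = ℤ`, `P¹₊ = H` and `τ(t, h) = t • h`. -/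
def P1 (H : Type) [AddCommGroup H] : HPair H where
  Neg := ℤ
  Pos := H
  tau := zmultiplesHom (H →+ H) (AddMonoidHom.id H)

/-- The generating-set length `d(H)`: the minimal `k` such that there is a
surjection `ℤ^k → H`. -/
noncomputable def dlen (H : Type) [AddCommGroup H] : ℕ :=
  sInf { k : ℕ | ∃ φ : (Fin k → ℤ) →+ H, Function.Surjective φ }

end HPairs

section WallForms

variable {H : Type} [AddCommGroup H]

/-- A form parameter `(G, ∂, π, ε)` for the category of `H`-pairs.  The two
compatibility identities `bd_eps` and `pi_bd` hold in the geometric setting of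
the paper and are needed for the standard Wall forms to exist. -/
structure FormParameter (H : Type) [AddCommGroup H] where
  G : HPair H
  bd : H →+ G.Pos
  pi : G.Pos →+ H
  eps : ℤ
  eps_pm : eps = 1 ∨ eps = -1
  bd_eps : ∀ h : H, bd (eps • h) = bd h
  pi_bd : ∀ h : H, pi (bd h) = h + eps • h

variable {P : FormParameter H}

/-- A Wall form structure (with parameter `P`) on the `H`-pair `C`. -/
structure WallAux (P : FormParameter H) (C : HPair H) where
  lam : C.Neg →+ C.Pos →+ ℤ
  mu : C.Pos →+ C.Pos →+ H
  alphaNeg : C.Neg →+ P.G.Neg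
  alphaPos : C.Pos → P.G.Pos
  mu_symm : ∀ y y', mu y y' = P.eps • mu y' y
  lam_tau : ∀ x x' h, lam x (C.tau x' h) = 0
  mu_tau : ∀ x h y, mu (C.tau x h) y = lam x y • h
  alphaPos_add : ∀ y y', alphaPos (y + y') = alphaPos y + alphaPos y' + P.bd (mu y y')
  mu_diag : ∀ y, mu y y = P.pi (alphaPos y)
  alphaPos_tau : ∀ x h, alphaPos (C.tau x h) = P.G.tau (alphaNeg x) h

/-- A Wall form with parameter `P`: a finitely generated `H`-pair together
with a Wall form structure. -/
structure WallForm (P : FormParameter H) where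
  carrier : HPair H
  fgNeg : AddGroup.FG carrier.Neg
  fgPos : AddGroup.FG carrier.Pos
  str : WallAux P carrier

/-- The property of an `H`-map to preserve all values of `λ`, `μ`, `α₋`, `α₊`. -/
def IsWallHom {C D : HPair H} (S : WallAux P C) (T : WallAux P D)
    (f : HPairHom C D) : Prop :=
  (∀ x y, T.lam (f.neg x) (f.pos y) = S.lam x y) ∧
  (∀ y y', T.mu (f.pos y) (f.pos y') = S.mu y y') ∧
  (∀ x, T.alphaNeg (f.neg x) = S.alphaNeg x) ∧
  (∀ y, T.alphaPos (f.pos y) = S.alphaPos y)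

/-- A morphism of Wall forms. -/
structure WallHom (M N : WallForm P) where
  hom : HPairHom M.carrier N.carrier
  isWall : IsWallHom M.str N.str hom

/-- An isomorphism of Wall forms: a morphism with a two-sided inverse morphism. -/
structure WallIso (M N : WallForm P) where
  toHom : WallHom M N
  invHom : WallHom N M
  left_neg : ∀ x, invHom.hom.neg (toHom.hom.neg x) = x
  right_neg : ∀ x, toHom.hom.neg (invHom.hom.neg x) = x
  left_pos : ∀ y, invHom.hom.pos (toHom.hom.pos y) = y
  right_pos : ∀ y, toHom.hom.pos (invHom.hom.pos y) = y

end WallForms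
section Extra

variable {H : Type} [AddCommGroup H] {P : FormParameter H}

/-- A subgroup of a finitely generated abelian group is finitely generated. -/
theorem addGroup_fg_subgroup {A : Type} [AddCommGroup A] (hA : AddGroup.FG A)
    (S : AddSubgroup A) : AddGroup.FG S := by
  haveI : Module.Finite ℤ A := Module.Finite.iff_addGroup_fg.mpr hA
  haveI : IsNoetherian ℤ A := isNoetherian_of_isNoetherianRing_of_finite ℤ A
  have h : (AddSubgroup.toIntSubmodule S).FG := IsNoetherian.noetherian _
  have h2 : Module.Finite ℤ (AddSubgroup.toIntSubmodule S) := Module.Finite.iff_fg.mpr h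
  exact Module.Finite.iff_addGroup_fg.mp h2

theorem addGroup_fg_of_module_finite {A : Type} [AddCommGroup A]
    [Module.Finite ℤ A] : AddGroup.FG A :=
  Module.Finite.iff_addGroup_fg.mp inferInstance

end Extra

section StdWall

variable {H : Type} [AddCommGroup H]

/-- The underlying `H`-pair of the standard Wall form of rank `g`:
`W^g₋ = ℤ^g` and `W^g₊ = ℤ^g × H^g`  (the first factor records the
`b`-coordinates, the second the `τ(a_i, -)`-coordinates). -/
@[reducible] def stdPair (H : Type) [AddCommGroup H] (g : ℕ) : HPair H where
  Neg := Fin g → ℤ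
  Pos := (Fin g → ℤ) × (Fin g → H)
  tau :=
    { toFun := fun x =>
        { toFun := fun h => (0, fun i => x i • h)
          map_zero' := by
            refine Prod.ext rfl ?_
            funext i
            simp
          map_add' := by
            intro h h'
            refine Prod.ext (by simp) ?_
            funext i
            simp [smul_add] }
      map_zero' := by
        refine AddMonoidHom.ext fun h => ?_
        refine Prod.ext rfl ?_
        funext i
        simp
      map_add' := by
        intro x x'
        refine AddMonoidHom.ext fun h => ?_
        refine Prod.ext (by simp) ?_
        funext i
        simp [add_smul] }

variable (P : FormParameter H)

/-- The standard Wall form `W^g` of rank `g` with parameter `P`. -/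
def stdWall [AddGroup.FG H] (g : ℕ) : WallForm P where
  carrier := stdPair H g
  fgNeg := by
    have : Module.Finite ℤ (Fin g → ℤ) := inferInstance
    exact addGroup_fg_of_module_finite
  fgPos := by
    haveI : Module.Finite ℤ H := Module.Finite.iff_addGroup_fg.mpr ‹AddGroup.FG H›
    have : Module.Finite ℤ ((Fin g → ℤ) × (Fin g → H)) := inferInstance
    exact addGroup_fg_of_module_finite
  str :=
    { lam :=
        { toFun := fun x =>
            { toFun := fun w => ∑ i, x i * w.1 i
              map_zero' := by simp
              map_add' := by
                intro w w'
                simp [mul_add, Finset.sum_add_distrib] }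
          map_zero' := by
            refine AddMonoidHom.ext fun w => ?_
            show (∑ i, (0 : Fin g → ℤ) i * w.1 i) = 0
            simp
          map_add' := by
            intro x x'
            refine AddMonoidHom.ext fun w => ?_
            simp [add_mul, Finset.sum_add_distrib] }
      mu :=
        { toFun := fun w =>
            { toFun := fun w' => (∑ i, w'.1 i • w.2 i) + P.eps • ∑ i, w.1 i • w'.2 i
              map_zero' := by simp
              map_add' := by
                intro w' w''
                simp only [Prod.fst_add, Prod.snd_add, Pi.add_apply, add_smul, smul_add,
                  Finset.sum_add_distrib]
                abel }
          map_zero' := by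
            refine AddMonoidHom.ext fun w' => ?_
            simp
          map_add' := by
            intro w w'
            refine AddMonoidHom.ext fun w'' => ?_
            simp only [Prod.fst_add, Prod.snd_add, Pi.add_apply, add_smul, smul_add,
              Finset.sum_add_distrib, AddMonoidHom.coe_mk, ZeroHom.coe_mk,
              AddMonoidHom.add_apply]
            abel }
      alphaNeg := 0
      alphaPos := fun w => P.bd (∑ i, w.1 i • w.2 i)
      mu_symm := by
        intro y y'
        have he : P.eps * P.eps = 1 := by
          rcases P.eps_pm with h | h <;> simp [h]
        show (∑ i, y'.1 i • y.2 i) + P.eps • ∑ i, y.1 i • y'.2 i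
            = P.eps • ((∑ i, y.1 i • y'.2 i) + P.eps • ∑ i, y'.1 i • y.2 i)
        rw [smul_add, smul_smul, he, one_smul, add_comm]
      lam_tau := by
        intro x x' h
        show (∑ i, x i * (0 : Fin _ → ℤ) i) = 0
        simp
      mu_tau := by
        intro x h y
        show (∑ i, y.1 i • (fun i => x i • h) i) + P.eps • ∑ i, (0 : Fin _ → ℤ) i • y.2 i
            = (∑ i, x i * y.1 i) • h
        simp only [Pi.zero_apply, zero_smul, Finset.sum_const_zero, smul_zero, add_zero]
        rw [Finset.sum_smul]
        congr 1
        funext i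
        rw [smul_smul, mul_comm]
      alphaPos_add := by
        intro y y'
        show P.bd (∑ i, (y.1 i + y'.1 i) • (y.2 i + y'.2 i))
            = P.bd (∑ i, y.1 i • y.2 i) + P.bd (∑ i, y'.1 i • y'.2 i)
              + P.bd ((∑ i, y'.1 i • y.2 i) + P.eps • ∑ i, y.1 i • y'.2 i)
        have expand : ∀ i : Fin _, (y.1 i + y'.1 i) • (y.2 i + y'.2 i)
            = (y.1 i • y.2 i + y'.1 i • y'.2 i) + (y'.1 i • y.2 i + y.1 i • y'.2 i) := by
          intro i
          rw [add_smul, smul_add, smul_add]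
          abel
        rw [Finset.sum_congr rfl fun i _ => expand i, Finset.sum_add_distrib,
          Finset.sum_add_distrib, Finset.sum_add_distrib, map_add, map_add, map_add, map_add,
          P.bd_eps]
      mu_diag := by
        intro y
        show (∑ i, y.1 i • y.2 i) + P.eps • ∑ i, y.1 i • y.2 i
            = P.pi (P.bd (∑ i, y.1 i • y.2 i))
        rw [P.pi_bd]
      alphaPos_tau := by
        intro x h
        show P.bd (∑ i, (0 : Fin _ → ℤ) i • (fun i => x i • h) i) = P.G.tau ((0 : _ →+ _) x) h
        simp }

variable {P}

/-- The `i`-th standard generator `a_i ∈ W^g₋`. -/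
def stdA [AddGroup.FG H] {g : ℕ} (i : Fin g) : (stdWall P g).carrier.Neg :=
  Pi.single i 1

/-- The `i`-th standard generator `b_i ∈ W^g₊`. -/
def stdB [AddGroup.FG H] {g : ℕ} (i : Fin g) : (stdWall P g).carrier.Pos :=
  (Pi.single i 1, 0)

end StdWall
section SubPairs

variable {H : Type} [AddCommGroup H] {P : FormParameter H}

/-- A sub-`H`-pair of the `H`-pair `C`. -/
structure SubPair (C : HPair H) where
  neg : AddSubgroup C.Neg
  pos : AddSubgroup C.Pos
  tau_mem : ∀ x ∈ neg, ∀ h, C.tau x h ∈ pos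

/-- The componentwise intersection of two sub-`H`-pairs. -/
def SubPair.inf {C : HPair H} (N N' : SubPair C) : SubPair C where
  neg := N.neg ⊓ N'.neg
  pos := N.pos ⊓ N'.pos
  tau_mem := fun x hx h => ⟨N.tau_mem x hx.1 h, N'.tau_mem x hx.2 h⟩

/-- The image of an `H`-map, as a sub-`H`-pair of the codomain. -/
def HPairHom.rangeSub {C D : HPair H} (f : HPairHom C D) : SubPair D where
  neg := f.neg.range
  pos := f.pos.range
  tau_mem := by
    rintro x ⟨a, rfl⟩ h
    exact ⟨C.tau a h, f.comm a h⟩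

/-- The kernel of an `H`-map, as a sub-`H`-pair of the domain. -/
def HPairHom.kerSub {C D : HPair H} (f : HPairHom C D) : SubPair C where
  neg := f.neg.ker
  pos := f.pos.ker
  tau_mem := by
    intro x hx h
    have hx' : f.neg x = 0 := hx
    have h2 : f.pos (C.tau x h) = D.tau (f.neg x) h := f.comm x h
    rw [hx'] at h2
    have h3 : f.pos (C.tau x h) = 0 := by
      rw [h2, map_zero, AddMonoidHom.zero_apply]
    exact h3

/-- The orthogonal complement of a sub-`H`-pair, with respect to a Wall form
structure `S` on the ambient `H`-pair. -/
def SubPair.perp {C : HPair H} (S : WallAux P C) (N : SubPair C) : SubPair C where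
  neg :=
    { carrier := { x | ∀ w ∈ N.pos, S.lam x w = 0 }
      add_mem' := by
        intro a b ha hb w hw
        rw [map_add, AddMonoidHom.add_apply, ha w hw, hb w hw, add_zero]
      zero_mem' := by
        intro w hw
        rw [map_zero, AddMonoidHom.zero_apply]
      neg_mem' := by
        intro a ha w hw
        rw [map_neg, AddMonoidHom.neg_apply, ha w hw, neg_zero] }
  pos :=
    { carrier := { y | (∀ v ∈ N.neg, S.lam v y = 0) ∧ ∀ w ∈ N.pos, S.mu y w = 0 }
      add_mem' := by
        intro a b ha hb
        refine ⟨fun v hv => ?_, fun w hw => ?_⟩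
        · rw [map_add, ha.1 v hv, hb.1 v hv, add_zero]
        · rw [map_add, AddMonoidHom.add_apply, ha.2 w hw, hb.2 w hw, add_zero]
      zero_mem' := by
        refine ⟨fun v hv => ?_, fun w hw => ?_⟩
        · rw [map_zero]
        · rw [map_zero, AddMonoidHom.zero_apply]
      neg_mem' := by
        intro a ha
        refine ⟨fun v hv => ?_, fun w hw => ?_⟩
        · rw [map_neg, ha.1 v hv, neg_zero]
        · rw [map_neg, AddMonoidHom.neg_apply, ha.2 w hw, neg_zero] }
  tau_mem := by
    intro x hx h
    refine ⟨fun v hv => S.lam_tau v x h, fun w hw => ?_⟩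
    rw [S.mu_tau x h w, hx w hw, zero_smul]

/-- Orthogonality of two sub-`H`-pairs with respect to a Wall form structure
`S`: trivial intersection and mutual containment in orthogonal complements. -/
def OrthogonalIn {C : HPair H} (S : WallAux P C) (N N' : SubPair C) : Prop :=
  N.neg ⊓ N'.neg = ⊥ ∧ N.pos ⊓ N'.pos = ⊥ ∧
  N.neg ≤ (N'.perp S).neg ∧ N.pos ≤ (N'.perp S).pos ∧
  N'.neg ≤ (N.perp S).neg ∧ N'.pos ≤ (N.perp S).pos

/-- The underlying `H`-pair of a sub-`H`-pair. -/
@[reducible] def SubPair.toPair {C : HPair H} (N : SubPair C) : HPair H where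
  Neg := N.neg
  Pos := N.pos
  tau :=
    { toFun := fun x =>
        { toFun := fun h => ⟨C.tau x h, N.tau_mem x x.2 h⟩
          map_zero' := by
            apply Subtype.ext
            simp
          map_add' := by
            intro h h'
            apply Subtype.ext
            simp }
      map_zero' := by
        refine AddMonoidHom.ext fun h => ?_
        apply Subtype.ext
        simp
      map_add' := by
        intro x x'
        refine AddMonoidHom.ext fun h => ?_
        apply Subtype.ext
        simp }

/-- The restriction of a Wall form structure to a sub-`H`-pair. -/
def SubPair.restrict {C : HPair H} (S : WallAux P C) (N : SubPair C) :
    WallAux P N.toPair where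
  lam :=
    { toFun := fun x => (S.lam (x : C.Neg)).comp N.pos.subtype
      map_zero' := by
        refine AddMonoidHom.ext fun y => ?_
        simp
      map_add' := by
        intro x x'
        refine AddMonoidHom.ext fun y => ?_
        simp }
  mu :=
    { toFun := fun y => (S.mu (y : C.Pos)).comp N.pos.subtype
      map_zero' := by
        refine AddMonoidHom.ext fun y => ?_
        simp
      map_add' := by
        intro y y'
        refine AddMonoidHom.ext fun y'' => ?_
        simp }
  alphaNeg := S.alphaNeg.comp N.neg.subtype
  alphaPos := fun y => S.alphaPos (y : C.Pos)
  mu_symm := fun y y' => S.mu_symm (y : C.Pos) y'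
  lam_tau := fun x x' h => S.lam_tau (x : C.Neg) x' h
  mu_tau := fun x h y => S.mu_tau (x : C.Neg) h y
  alphaPos_add := fun y y' => S.alphaPos_add (y : C.Pos) y'
  mu_diag := fun y => S.mu_diag (y : C.Pos)
  alphaPos_tau := fun x h => S.alphaPos_tau (x : C.Neg) h

/-- A sub-`H`-pair of (the carrier of) a Wall form is itself a Wall form, via
the restricted structure maps. -/
def SubPair.toWall {M : WallForm P} (N : SubPair M.carrier) : WallForm P where
  carrier := N.toPair
  fgNeg := addGroup_fg_subgroup M.fgNeg N.neg
  fgPos := addGroup_fg_subgroup M.fgPos N.pos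
  str := N.restrict M.str

end SubPairs
section SumAndRank

variable {H : Type} [AddCommGroup H] {P : FormParameter H}

/-- The orthogonal direct sum of two Wall forms. -/
def WallForm.sum (M N : WallForm P) : WallForm P where
  carrier := M.carrier.sum N.carrier
  fgNeg := by
    haveI : Module.Finite ℤ M.carrier.Neg := Module.Finite.iff_addGroup_fg.mpr M.fgNeg
    haveI : Module.Finite ℤ N.carrier.Neg := Module.Finite.iff_addGroup_fg.mpr N.fgNeg
    have : Module.Finite ℤ (M.carrier.Neg × N.carrier.Neg) := inferInstance
    exact Module.Finite.iff_addGroup_fg.mp this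
  fgPos := by
    haveI : Module.Finite ℤ M.carrier.Pos := Module.Finite.iff_addGroup_fg.mpr M.fgPos
    haveI : Module.Finite ℤ N.carrier.Pos := Module.Finite.iff_addGroup_fg.mpr N.fgPos
    have : Module.Finite ℤ (M.carrier.Pos × N.carrier.Pos) := inferInstance
    exact Module.Finite.iff_addGroup_fg.mp this
  str :=
    { lam :=
        { toFun := fun x => (M.str.lam x.1).coprod (N.str.lam x.2)
          map_zero' := by
            refine AddMonoidHom.ext fun y => ?_
            simp
          map_add' := by
            intro x x'
            refine AddMonoidHom.ext fun y => ?_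
            simp
            abel }
      mu :=
        { toFun := fun y => (M.str.mu y.1).coprod (N.str.mu y.2)
          map_zero' := by
            refine AddMonoidHom.ext fun y' => ?_
            simp
          map_add' := by
            intro y y'
            refine AddMonoidHom.ext fun y'' => ?_
            simp
            abel }
      alphaNeg := (M.str.alphaNeg).coprod (N.str.alphaNeg)
      alphaPos := fun y => M.str.alphaPos y.1 + N.str.alphaPos y.2
      mu_symm := by
        intro y y'
        show M.str.mu y.1 y'.1 + N.str.mu y.2 y'.2
            = P.eps • (M.str.mu y'.1 y.1 + N.str.mu y'.2 y.2)
        rw [smul_add, M.str.mu_symm y.1 y'.1, N.str.mu_symm y.2 y'.2]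
      lam_tau := by
        intro x x' h
        show M.str.lam x.1 (M.carrier.tau x'.1 h) + N.str.lam x.2 (N.carrier.tau x'.2 h) = 0
        rw [M.str.lam_tau, N.str.lam_tau, add_zero]
      mu_tau := by
        intro x h y
        show M.str.mu (M.carrier.tau x.1 h) y.1 + N.str.mu (N.carrier.tau x.2 h) y.2
            = (M.str.lam x.1 y.1 + N.str.lam x.2 y.2) • h
        rw [M.str.mu_tau, N.str.mu_tau, add_smul]
      alphaPos_add := by
        intro y y'
        show M.str.alphaPos (y.1 + y'.1) + N.str.alphaPos (y.2 + y'.2)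
            = (M.str.alphaPos y.1 + N.str.alphaPos y.2)
              + (M.str.alphaPos y'.1 + N.str.alphaPos y'.2)
              + P.bd (M.str.mu y.1 y'.1 + N.str.mu y.2 y'.2)
        rw [M.str.alphaPos_add, N.str.alphaPos_add, map_add]
        abel
      mu_diag := by
        intro y
        show M.str.mu y.1 y.1 + N.str.mu y.2 y.2
            = P.pi (M.str.alphaPos y.1 + N.str.alphaPos y.2)
        rw [map_add, M.str.mu_diag, N.str.mu_diag]
      alphaPos_tau := by
        intro x h
        show M.str.alphaPos (M.carrier.tau x.1 h) + N.str.alphaPos (N.carrier.tau x.2 h)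
            = P.G.tau (M.str.alphaNeg x.1 + N.str.alphaNeg x.2) h
        rw [M.str.alphaPos_tau, N.str.alphaPos_tau, map_add, AddMonoidHom.add_apply] }

variable [AddGroup.FG H]

/-- `rankGE M g` expresses the inequality `r(M) ≥ g` for the rank of a Wall
form: there exists a morphism of Wall forms `W^g → M`. -/
def rankGE (M : WallForm P) (g : ℕ) : Prop :=
  Nonempty (WallHom (stdWall P g) M)

/-- `srankGE M g` expresses the inequality `r̄(M) ≥ g` for the stable rank of
a Wall form: `r(M ⊕ W^j) ≥ g + j` for some `j`. -/
def srankGE (M : WallForm P) (g : ℕ) : Prop :=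
  ∃ j : ℕ, rankGE (M.sum (stdWall P j)) (g + j)

end SumAndRank

section Duality

variable {H : Type} [AddCommGroup H] {P : FormParameter H}

/-- The duality map `T⁰ : M₋ → Hom(M, P⁰)` of a Wall form. -/
def dualT0 (M : WallForm P) (v : M.carrier.Neg) : HPairHom M.carrier (P0 H) where
  neg := 0
  pos := M.str.lam v
  comm := by
    intro x h
    show M.str.lam v (M.carrier.tau x h) = ((P0 H).tau 0) h
    rw [M.str.lam_tau]
    show (0 : ℤ) = ((0 : _ →+ (H →+ ℤ)) 0) h
    rfl

/-- The duality map `T¹ : M₊ → Hom(M, P¹)` of a Wall form. -/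
def dualT1 (M : WallForm P) (w : M.carrier.Pos) : HPairHom M.carrier (P1 H) where
  neg := M.str.lam.flip w
  pos := M.str.mu.flip w
  comm := by
    intro x h
    show M.str.mu (M.carrier.tau x h) w = (P1 H).tau (M.str.lam x w) h
    rw [M.str.mu_tau]
    show M.str.lam x w • h = (M.str.lam x w • AddMonoidHom.id H) h
    simp

end Duality

/-!
A Wall form morphism `W → M` amounts to a hyperbolic pair `(m, u)` in `M`: `λ(m, u) = 1` and
`μ(u, u)`, `α₋(m)`, `α₊(u)` vanish. Let `f : W^n → M ⊕ W^j` with `n = 2 + d(H) + j > j`. The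
`ℤ^j`-valued `b`-coordinates of `f` on the span of the `b_i` form a linear map `ℤ^n → ℤ^j`, whose
kernel contains a primitive vector `c`, say `∑ dᵢ cᵢ = 1`. Then `f` sends the hyperbolic pair
`(d, c)` of `W^n` to a hyperbolic pair of `M ⊕ W^j` whose `W^j`-component lies in `0 × H^j`,
where `λ`, `μ` and `α₊` vanish identically; hence its `M`-component is a hyperbolic pair of `M`.
-/

theorem exists_mem_ker_sum_mul_eq_one {n j : ℕ} (hjn : j < n)
    (T : (Fin n → ℤ) →ₗ[ℤ] (Fin j → ℤ)) :
    ∃ c d : Fin n → ℤ, T c = 0 ∧ ∑ i, d i * c i = 1 := by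
  have hker : LinearMap.ker T ≠ ⊥ := by
    intro hbot
    have := LinearMap.finrank_le_finrank_of_injective (LinearMap.ker_eq_bot.mp hbot)
    simp only [Module.finrank_fin_fun] at this
    omega
  obtain ⟨c, hc, hc0⟩ := (Submodule.ne_bot_iff _).mp hker
  have : Nonempty (Fin n) := ⟨⟨0, by omega⟩⟩
  obtain ⟨e, hce, he⟩ := Finset.univ.extract_gcd c Finset.univ_nonempty
  obtain ⟨d, hd⟩ := Finset.univ.gcd_eq_sum_mul e
  have hg : Finset.univ.gcd c ≠ 0 := fun h0 =>
    hc0 (funext fun i => Finset.gcd_eq_zero_iff.mp h0 i (Finset.mem_univ i))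
  refine ⟨e, d, ?_, by simpa [he, mul_comm] using hd.symm⟩
  have hsmul : Finset.univ.gcd c • e = c := funext fun i => (hce i (Finset.mem_univ i)).symm
  have : Finset.univ.gcd c • T e = 0 := by rw [← map_smul, hsmul]; exact hc
  exact (smul_eq_zero.mp this).resolve_left hg

section HyperbolicPair

variable {H : Type} [AddCommGroup H] {P : FormParameter H}

def WallAux.IsHyperbolicPair {C : HPair H} (S : WallAux P C) (x : C.Neg) (y : C.Pos) : Prop :=
  S.lam x y = 1 ∧ S.mu y y = 0 ∧ S.alphaNeg x = 0 ∧ S.alphaPos y = 0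

theorem WallAux.alphaPos_zsmul_of_mu_self_eq_zero {C : HPair H} (S : WallAux P C) {y : C.Pos}
    (hy : S.mu y y = 0) (n : ℤ) : S.alphaPos (n • y) = n • S.alphaPos y := by
  let φ : ℤ →+ P.G.Pos := AddMonoidHom.mk' (fun k => S.alphaPos (k • y)) fun a b => by
    simp [add_smul, S.alphaPos_add, hy]
  simpa [φ] using φ.apply_int _ n

theorem IsWallHom.map_isHyperbolicPair {C D : HPair H} {S : WallAux P C} {T : WallAux P D}
    {f : HPairHom C D} (hf : IsWallHom S T f) {x : C.Neg} {y : C.Pos}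
    (h : S.IsHyperbolicPair x y) : T.IsHyperbolicPair (f.neg x) (f.pos y) := by
  obtain ⟨hlam, hmu, hneg, hpos⟩ := hf
  exact ⟨(hlam x y).trans h.1, (hmu y y).trans h.2.1, (hneg x).trans h.2.2.1,
    (hpos y).trans h.2.2.2⟩

theorem WallAux.IsHyperbolicPair.fst_of_sum {M N : WallForm P}
    {x : (M.sum N).carrier.Neg} {y : (M.sum N).carrier.Pos}
    (h : (M.sum N).str.IsHyperbolicPair x y)
    (hlam : N.str.lam x.2 y.2 = 0) (hmu : N.str.mu y.2 y.2 = 0)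
    (hneg : N.str.alphaNeg x.2 = 0) (hpos : N.str.alphaPos y.2 = 0) :
    M.str.IsHyperbolicPair x.1 y.1 := by
  obtain ⟨h₁, h₂, h₃, h₄⟩ := h
  change M.str.lam x.1 y.1 + N.str.lam x.2 y.2 = 1 at h₁
  change M.str.mu y.1 y.1 + N.str.mu y.2 y.2 = 0 at h₂
  change M.str.alphaNeg x.1 + N.str.alphaNeg x.2 = 0 at h₃
  change M.str.alphaPos y.1 + N.str.alphaPos y.2 = 0 at h₄
  rw [hlam, add_zero] at h₁
  rw [hmu, add_zero] at h₂
  rw [hneg, add_zero] at h₃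
  rw [hpos, add_zero] at h₄
  exact ⟨h₁, h₂, h₃, h₄⟩

variable [AddGroup.FG H]

theorem stdWall_isHyperbolicPair {g : ℕ} {c d : Fin g → ℤ} (hdc : ∑ i, d i * c i = 1) :
    (stdWall P g).str.IsHyperbolicPair d (c, 0) := by
  refine ⟨hdc, ?_, rfl, ?_⟩
  · change (∑ i, c i • (0 : Fin g → H) i) + P.eps • ∑ i, c i • (0 : Fin g → H) i = 0
    simp
  · change P.bd (∑ i, c i • (0 : Fin g → H) i) = 0
    simp

theorem WallAux.IsHyperbolicPair.fst_of_sum_stdWall {M : WallForm P} {j : ℕ}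
    {x : (M.sum (stdWall P j)).carrier.Neg} {y : (M.sum (stdWall P j)).carrier.Pos}
    (h : (M.sum (stdWall P j)).str.IsHyperbolicPair x y) (hy : y.2.1 = 0) :
    M.str.IsHyperbolicPair x.1 y.1 := by
  refine h.fst_of_sum ?_ ?_ rfl ?_
  · change ∑ k, x.2 k * y.2.1 k = 0
    simp [hy]
  · change (∑ k, y.2.1 k • y.2.2 k) + P.eps • ∑ k, y.2.1 k • y.2.2 k = 0
    simp [hy]
  · change P.bd (∑ k, y.2.1 k • y.2.2 k) = 0
    simp [hy]

def WallForm.hyperbolicPairHom (M : WallForm P) (m : M.carrier.Neg) (u : M.carrier.Pos) :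
    HPairHom (stdWall P 1).carrier M.carrier where
  neg := (zmultiplesHom _ m).comp (Pi.evalAddMonoidHom (fun _ => ℤ) 0)
  pos :=
    (zmultiplesHom _ u).comp ((Pi.evalAddMonoidHom (fun _ => ℤ) 0).comp (AddMonoidHom.fst _ _)) +
      (M.carrier.tau m).comp ((Pi.evalAddMonoidHom (fun _ => H) 0).comp (AddMonoidHom.snd _ _))
  comm x h := by
    change (0 : ℤ) • u + M.carrier.tau m (x 0 • h) = M.carrier.tau (x 0 • m) h
    simp

theorem WallForm.isWallHom_hyperbolicPairHom (M : WallForm P) {m : M.carrier.Neg}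
    {u : M.carrier.Pos} (h : M.str.IsHyperbolicPair m u) :
    IsWallHom (stdWall P 1).str M.str (M.hyperbolicPairHom m u) := by
  obtain ⟨hlam, hmu, hneg, hpos⟩ := h
  have hmu_tau_left (k : H) : M.str.mu (M.carrier.tau m k) u = k := by
    rw [M.str.mu_tau, hlam, one_smul]
  have hmu_tau_right (k : H) : M.str.mu u (M.carrier.tau m k) = P.eps • k := by
    rw [M.str.mu_symm, hmu_tau_left]
  have hmu_tau_tau (k k' : H) : M.str.mu (M.carrier.tau m k) (M.carrier.tau m k') = 0 := by
    rw [M.str.mu_tau, M.str.lam_tau, zero_smul]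
  refine ⟨fun x y => ?_, fun y y' => ?_, fun x => ?_, fun y => ?_⟩
  · change M.str.lam (x 0 • m) (y.1 0 • u + M.carrier.tau m (y.2 0)) =
      ∑ i : Fin 1, x i * y.1 i
    simp [M.str.lam_tau, hlam]
  · change M.str.mu (y.1 0 • u + M.carrier.tau m (y.2 0))
        (y'.1 0 • u + M.carrier.tau m (y'.2 0)) =
      (∑ i : Fin 1, y'.1 i • y.2 i) + P.eps • ∑ i : Fin 1, y.1 i • y'.2 i
    simp [hmu, hmu_tau_left, hmu_tau_right, hmu_tau_tau, smul_comm (y.1 0) P.eps, add_comm]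
  · change M.str.alphaNeg (x 0 • m) = 0
    simp [hneg]
  · change M.str.alphaPos (y.1 0 • u + M.carrier.tau m (y.2 0)) =
      P.bd (∑ i : Fin 1, y.1 i • y.2 i)
    rw [M.str.alphaPos_add, M.str.alphaPos_zsmul_of_mu_self_eq_zero hmu, hpos, M.str.alphaPos_tau,
      hneg]
    simp [hmu_tau_right, smul_comm (y.1 0) P.eps, P.bd_eps]

end HyperbolicPair

/-- If `r̄(M) ≥ 2 + d(H)` then there exists a Wall form
morphism `W → M`, i.e. the complex `L(M)` is non-empty. -/
theorem statement_16 {H : Type} [AddCommGroup H] [AddGroup.FG H]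
    (P : FormParameter H) (M : WallForm P) (h : srankGE M (2 + dlen H)) :
    Nonempty (WallHom (stdWall P 1) M) := by
  obtain ⟨j, ⟨f⟩⟩ := h
  let bCoords : (Fin (2 + dlen H + j) → ℤ) →ₗ[ℤ] (Fin j → ℤ) :=
    ((AddMonoidHom.fst _ _).comp ((AddMonoidHom.snd _ _).comp
      (f.hom.pos.comp (AddMonoidHom.inl _ _)))).toIntLinearMap
  obtain ⟨c, d, hc, hdc⟩ := exists_mem_ker_sum_mul_eq_one (by omega) bCoords
  have hpair : M.str.IsHyperbolicPair (f.hom.neg d).1 (f.hom.pos (c, 0)).1 :=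
    (f.isWall.map_isHyperbolicPair (stdWall_isHyperbolicPair hdc)).fst_of_sum_stdWall hc
  exact ⟨⟨_, M.isWallHom_hyperbolicPairHom hpair⟩⟩
end

section
/- Let M be a Wall form with stable rank r̄(M) ≥ 4 + d, where d = d(H). Then the complex L(M) is connected: any two Wall form morphisms f, f' : W → M can be joined by a finite sequence f = f_0, f_1, …, f_n = f' of morphisms W → M in which the images of consecutive morphisms are orthogonal sub-Wall forms of M. -/
/-!
A vertex `f : W → M` of `L(M)` is the same as a hyperbolic pair `(z, w) = (f a, f b)` in `M`, and
two vertices are adjacent exactly when their pairs are orthogonal. The hypothesis provides, for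
some `j`, at least `j + 4` pairwise orthogonal hyperbolic pairs in `M ⊕ W^j`.

Transvections inside such a family run Euclid's algorithm on the values `λ(e, wᵢ)`, clearing all
but one of them; after that the projection `w ↦ w + τ(p.z, -μ(w, p.w))` makes the remaining pairs
orthogonal to a given pair `p` with `p.z = e`. So each pair we want to be orthogonal to costs one
member of the family. Paying for the `j` standard pairs of `W^j` and for the pair of `f` leaves
three pairs; one more Euclid step against the pair of `f'` gives two orthogonal pairs `q ⊥ f` and
`q' ⊥ f'`, both orthogonal to `W^j` and hence lying in `M`. Then `f, q, q', f'` is a path in `L(M)`.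
-/

-- Lets `simp` and `rw` see the carriers of `W^g` and `M ⊕ N` as the underlying product types.
attribute [reducible] WallForm.sum stdWall

namespace WallAux

variable {H : Type} [AddCommGroup H] {P : FormParameter H} {C : HPair H} (S : WallAux P C)

lemma mu_tau_right (x : C.Neg) (h : H) (y : C.Pos) :
    S.mu y (C.tau x h) = P.eps • (S.lam x y • h) := by
  rw [S.mu_symm, S.mu_tau]

lemma mu_comm_eq_zero {y y' : C.Pos} (h : S.mu y y' = 0) : S.mu y' y = 0 := by
  rw [S.mu_symm, h, smul_zero]

lemma alphaPos_zero : S.alphaPos 0 = 0 := by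
  simpa using S.alphaPos_add 0 0

lemma alphaPos_add_of_mu_eq_zero {y y' : C.Pos} (h : S.mu y y' = 0) :
    S.alphaPos (y + y') = S.alphaPos y + S.alphaPos y' := by
  rw [S.alphaPos_add, h, map_zero, add_zero]

lemma alphaPos_zsmul_of_mu_self_eq_zero_s17 {y : C.Pos} (hy : S.mu y y = 0) (a : ℤ) :
    S.alphaPos (a • y) = a • S.alphaPos y := by
  let F : ℤ →+ P.G.Pos := AddMonoidHom.mk' (fun a => S.alphaPos (a • y)) fun a b => by
    refine add_smul a b y ▸ S.alphaPos_add_of_mu_eq_zero ?_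
    rw [map_zsmul, map_zsmul, AddMonoidHom.smul_apply, hy, smul_zero, smul_zero]
  simpa [F] using map_zsmul F a 1

lemma alphaPos_tau_of_alphaNeg_eq_zero {x : C.Neg} (hx : S.alphaNeg x = 0) (h : H) :
    S.alphaPos (C.tau x h) = 0 := by
  rw [S.alphaPos_tau, hx, map_zero, AddMonoidHom.zero_apply]

end WallAux

/-- The images `(z, w)` of `a` and `b` under a morphism `W → M`, which determine it. -/
@[ext]
structure HyperbolicPair {H : Type} [AddCommGroup H] {P : FormParameter H} {C : HPair H}
    (S : WallAux P C) where
  z : C.Neg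
  w : C.Pos
  lam_z_w : S.lam z w = 1
  mu_w_w : S.mu w w = 0
  alphaNeg_z : S.alphaNeg z = 0
  alphaPos_w : S.alphaPos w = 0

namespace HyperbolicPair

section Orthogonality

variable {H : Type} [AddCommGroup H] {P : FormParameter H} {C : HPair H} {S : WallAux P C}

structure IsOrtho (p q : HyperbolicPair S) : Prop where
  lam_z_w : S.lam p.z q.w = 0
  lam_w_z : S.lam q.z p.w = 0
  mu_w_w : S.mu p.w q.w = 0

lemma isOrtho_iff {p q : HyperbolicPair S} :
    p.IsOrtho q ↔ S.lam p.z q.w = 0 ∧ S.lam q.z p.w = 0 ∧ S.mu p.w q.w = 0 :=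
  ⟨fun ⟨h₁, h₂, h₃⟩ => ⟨h₁, h₂, h₃⟩, fun ⟨h₁, h₂, h₃⟩ => ⟨h₁, h₂, h₃⟩⟩

theorem IsOrtho.symm {p q : HyperbolicPair S} (h : p.IsOrtho q) : q.IsOrtho p :=
  ⟨h.lam_w_z, h.lam_z_w, S.mu_comm_eq_zero h.mu_w_w⟩

def orthSet (L : List (HyperbolicPair S)) : Set (HyperbolicPair S) :=
  {T | ∀ q ∈ L, T.IsOrtho q}

lemma mem_orthSet {L : List (HyperbolicPair S)} {T : HyperbolicPair S} :
    T ∈ orthSet L ↔ ∀ q ∈ L, T.IsOrtho q := Iff.rfl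

@[simp] lemma mem_orthSet_nil (T : HyperbolicPair S) : T ∈ orthSet [] := by
  simp [mem_orthSet]

@[simp] lemma mem_orthSet_cons {q T : HyperbolicPair S} {L : List (HyperbolicPair S)} :
    T ∈ orthSet (q :: L) ↔ T.IsOrtho q ∧ T ∈ orthSet L := by
  simp [mem_orthSet]

lemma orthSet_pair_comm (p q : HyperbolicPair S) : orthSet [p, q] = orthSet [q, p] := by
  ext T; simp [and_comm]

lemma pairwise_cons_iff {p : HyperbolicPair S} {L : List (HyperbolicPair S)} :
    (p :: L).Pairwise IsOrtho ↔ p ∈ orthSet L ∧ L.Pairwise IsOrtho :=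
  List.pairwise_cons

lemma lam_z_add_tau (p : HyperbolicPair S) (x : C.Neg) (a : ℤ) (k : H) :
    S.lam x (a • p.w + C.tau p.z k) = a * S.lam x p.w := by
  simp [S.lam_tau]

lemma IsOrtho.mu_add_tau {p q : HyperbolicPair S} (h : p.IsOrtho q) (a b : ℤ) (k l : H) :
    S.mu (a • p.w + C.tau p.z k) (b • q.w + C.tau q.z l) = 0 := by
  simp [S.mu_tau, S.mu_tau_right, S.lam_tau, h.lam_z_w, h.lam_w_z, h.mu_w_w]

end Orthogonality

section Map

variable {H : Type} [AddCommGroup H] {P : FormParameter H} {C D : HPair H}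
  {S : WallAux P C} {T : WallAux P D}

def map (f : HPairHom C D) (hf : IsWallHom S T f) (p : HyperbolicPair S) :
    HyperbolicPair T where
  z := f.neg p.z
  w := f.pos p.w
  lam_z_w := by rw [hf.1, p.lam_z_w]
  mu_w_w := by rw [hf.2.1, p.mu_w_w]
  alphaNeg_z := by rw [hf.2.2.1, p.alphaNeg_z]
  alphaPos_w := by rw [hf.2.2.2, p.alphaPos_w]

lemma isOrtho_map_iff {f : HPairHom C D} (hf : IsWallHom S T f) {p q : HyperbolicPair S} :
    (p.map f hf).IsOrtho (q.map f hf) ↔ p.IsOrtho q := by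
  simp only [isOrtho_iff, map, hf.1, hf.2.1]

lemma exists_eq_map {f : HPairHom C D} (hf : IsWallHom S T f) (p : HyperbolicPair T)
    {z : C.Neg} {w : C.Pos} (hz : p.z = f.neg z) (hw : p.w = f.pos w) :
    ∃ p₀ : HyperbolicPair S, p = p₀.map f hf := by
  refine ⟨⟨z, w, ?_, ?_, ?_, ?_⟩, HyperbolicPair.ext hz hw⟩
  · rw [← hf.1, ← hz, ← hw, p.lam_z_w]
  · rw [← hf.2.1, ← hw, p.mu_w_w]
  · rw [← hf.2.2.1, ← hz, p.alphaNeg_z]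
  · rw [← hf.2.2.2, ← hw, p.alphaPos_w]

end Map

section Transvections

variable {H : Type} [AddCommGroup H] {P : FormParameter H} {C : HPair H} {S : WallAux P C}

def addMul (p q : HyperbolicPair S) (h : p.IsOrtho q) (a : ℤ) : HyperbolicPair S where
  z := p.z
  w := p.w + a • q.w
  lam_z_w := by rw [map_add, map_zsmul, p.lam_z_w, h.lam_z_w, smul_zero, add_zero]
  mu_w_w := by
    simp only [map_add, map_zsmul, AddMonoidHom.add_apply, AddMonoidHom.smul_apply, p.mu_w_w,
      q.mu_w_w, h.mu_w_w, S.mu_comm_eq_zero h.mu_w_w, smul_zero, add_zero]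
  alphaNeg_z := p.alphaNeg_z
  alphaPos_w := by
    rw [S.alphaPos_add_of_mu_eq_zero (by rw [map_zsmul, h.mu_w_w, smul_zero]),
      S.alphaPos_zsmul_of_mu_self_eq_zero_s17 q.mu_w_w, p.alphaPos_w, q.alphaPos_w, smul_zero,
      add_zero]

/-- The transvection that keeps `q` orthogonal to `p.addMul q h a`. -/
def subMul (q p : HyperbolicPair S) (h : p.IsOrtho q) (a : ℤ) : HyperbolicPair S where
  z := q.z - a • p.z
  w := q.w
  lam_z_w := by
    rw [map_sub, map_zsmul, AddMonoidHom.sub_apply, AddMonoidHom.smul_apply, q.lam_z_w,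
      h.lam_z_w, smul_zero, sub_zero]
  mu_w_w := q.mu_w_w
  alphaNeg_z := by rw [map_sub, map_zsmul, q.alphaNeg_z, p.alphaNeg_z, smul_zero, sub_zero]
  alphaPos_w := q.alphaPos_w

lemma lam_addMul_w (e : C.Neg) {p q : HyperbolicPair S} (h : p.IsOrtho q) (a : ℤ) :
    S.lam e (p.addMul q h a).w = S.lam e p.w + a * S.lam e q.w := by
  simp [addMul]

lemma lam_subMul_w (e : C.Neg) {p q : HyperbolicPair S} (h : p.IsOrtho q) (a : ℤ) :
    S.lam e (q.subMul p h a).w = S.lam e q.w := rfl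

lemma IsOrtho.addMul_subMul {p q : HyperbolicPair S} (h : p.IsOrtho q) (a : ℤ) :
    (p.addMul q h a).IsOrtho (q.subMul p h a) where
  lam_z_w := h.lam_z_w
  lam_w_z := by simp [addMul, subMul, p.lam_z_w, q.lam_z_w, h.lam_z_w, h.lam_w_z]
  mu_w_w := by simp [addMul, subMul, h.mu_w_w, q.mu_w_w]

lemma orthSet_subset_addMul_subMul {p q : HyperbolicPair S} (h : p.IsOrtho q) (a : ℤ) :
    orthSet [p, q] ⊆ orthSet [p.addMul q h a, q.subMul p h a] := by
  intro T hT
  obtain ⟨hp, hq⟩ : T.IsOrtho p ∧ T.IsOrtho q := by simpa using hT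
  simp only [mem_orthSet_cons, mem_orthSet_nil, and_true]
  refine ⟨⟨?_, hp.lam_w_z, ?_⟩, ⟨hq.lam_z_w, ?_, hq.mu_w_w⟩⟩
  · simp [addMul, hp.lam_z_w, hq.lam_z_w]
  · simp [addMul, hp.mu_w_w, hq.mu_w_w]
  · simp [subMul, hp.lam_w_z, hq.lam_w_z]

theorem exists_isOrtho_lam_eq_zero (e : C.Neg) (p q : HyperbolicPair S) (h : p.IsOrtho q) :
    ∃ p' q' : HyperbolicPair S,
      p'.IsOrtho q' ∧ S.lam e q'.w = 0 ∧ orthSet [p, q] ⊆ orthSet [p', q'] := by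
  set a := S.lam e p.w
  set b := S.lam e q.w
  by_cases hb0 : b = 0
  · exact ⟨p, q, h, hb0, subset_rfl⟩
  by_cases ha0 : a = 0
  · exact ⟨q, p, h.symm, ha0, (orthSet_pair_comm p q).subset⟩
  rcases le_or_gt b.natAbs a.natAbs with hba | hab
  · have hlam : S.lam e (p.addMul q h (-(a / b))).w = a % b := by
      rw [lam_addMul_w, Int.emod_def]; ring
    have : (a % b).natAbs < b.natAbs := by
      have := Int.emod_nonneg a hb0; have := Int.emod_lt a hb0; omega
    obtain ⟨p', q', h', hq', hsub⟩ :=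
      exists_isOrtho_lam_eq_zero e _ _ (h.addMul_subMul (-(a / b)))
    exact ⟨p', q', h', hq', (orthSet_subset_addMul_subMul h _).trans hsub⟩
  · have hlam : S.lam e (q.addMul p h.symm (-(b / a))).w = b % a := by
      rw [lam_addMul_w, Int.emod_def]; ring
    have : (b % a).natAbs < a.natAbs := by
      have := Int.emod_nonneg b ha0; have := Int.emod_lt b ha0; omega
    obtain ⟨p', q', h', hq', hsub⟩ :=
      exists_isOrtho_lam_eq_zero e _ _ (h.symm.addMul_subMul (-(b / a))).symm
    refine ⟨p', q', h', hq', ?_⟩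
    rw [orthSet_pair_comm p q]
    exact (orthSet_subset_addMul_subMul h.symm _).trans
      ((orthSet_pair_comm _ _).subset.trans hsub)
termination_by (S.lam e p.w).natAbs + (S.lam e q.w).natAbs
decreasing_by
  · rw [hlam, lam_subMul_w]; omega
  · rw [hlam, lam_subMul_w]; omega

theorem exists_pairwise_lam_eq_zero (e : C.Neg) (p₀ : HyperbolicPair S)
    (L₀ : List (HyperbolicPair S)) (h : (p₀ :: L₀).Pairwise IsOrtho) :
    ∃ (p : HyperbolicPair S) (L : List (HyperbolicPair S)), L.length = L₀.length ∧
      (p :: L).Pairwise IsOrtho ∧ (∀ q ∈ L, S.lam e q.w = 0) ∧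
      orthSet (p₀ :: L₀) ⊆ orthSet (p :: L) := by
  induction L₀ generalizing p₀ with
  | nil => exact ⟨p₀, [], rfl, h, by simp, subset_rfl⟩
  | cons q₀ L₀ ih =>
    obtain ⟨hp₀, hq₀⟩ := pairwise_cons_iff.mp h
    obtain ⟨p₁, L₁, hlen, hpw, hlam, hsub⟩ := ih q₀ hq₀
    obtain ⟨hp₁, hL₁⟩ := pairwise_cons_iff.mp hpw
    obtain ⟨hp₀p₁, hp₀L₁⟩ := mem_orthSet_cons.mp (hsub hp₀)
    obtain ⟨p', q', h', hq', hsub'⟩ := exists_isOrtho_lam_eq_zero e p₀ p₁ hp₀p₁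
    have hL₁' : ∀ r ∈ L₁, r.IsOrtho p' ∧ r.IsOrtho q' := fun r hr => by
      simpa using hsub' (by simpa using ⟨(hp₀L₁ r hr).symm, (hp₁ r hr).symm⟩)
    refine ⟨p', q' :: L₁, by simp [hlen], ?_, by simpa using ⟨hq', hlam⟩, fun T hT => ?_⟩
    · simp only [List.pairwise_cons, List.mem_cons, forall_eq_or_imp]
      exact ⟨⟨h', fun r hr => (hL₁' r hr).1.symm⟩, fun r hr => (hL₁' r hr).2.symm, hL₁⟩
    · obtain ⟨hTp₀, hTq₀L₀⟩ := mem_orthSet_cons.mp hT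
      obtain ⟨hTp₁, hTL₁⟩ := mem_orthSet_cons.mp (hsub hTq₀L₀)
      simpa [hTL₁] using hsub' (by simpa using ⟨hTp₀, hTp₁⟩)

end Transvections

section Projection

variable {H : Type} [AddCommGroup H] {P : FormParameter H} {C : HPair H} {S : WallAux P C}

def orthProj (q p : HyperbolicPair S) (h : S.lam p.z q.w = 0) : HyperbolicPair S where
  z := q.z - S.lam q.z p.w • p.z
  w := q.w + C.tau p.z (-S.mu q.w p.w)
  lam_z_w := by simp [S.lam_tau, q.lam_z_w, h]
  mu_w_w := by simp [S.mu_tau, S.mu_tau_right, S.lam_tau, q.mu_w_w, h]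
  alphaNeg_z := by rw [map_sub, map_zsmul, q.alphaNeg_z, p.alphaNeg_z, smul_zero, sub_zero]
  alphaPos_w := by
    rw [S.alphaPos_add_of_mu_eq_zero (by rw [S.mu_tau_right, h, zero_smul, smul_zero]),
      q.alphaPos_w, S.alphaPos_tau_of_alphaNeg_eq_zero p.alphaNeg_z, add_zero]

lemma lam_orthProj_w (e : C.Neg) {q p : HyperbolicPair S} (h : S.lam p.z q.w = 0) :
    S.lam e (q.orthProj p h).w = S.lam e q.w := by
  simp [orthProj, S.lam_tau]

lemma isOrtho_orthProj_self {q p : HyperbolicPair S} (h : S.lam p.z q.w = 0) :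
    (q.orthProj p h).IsOrtho p where
  lam_z_w := by simp [orthProj, p.lam_z_w]
  lam_w_z := by rw [lam_orthProj_w, h]
  mu_w_w := by simp [orthProj, S.mu_tau, p.lam_z_w]

lemma IsOrtho.orthProj {q p T : HyperbolicPair S} (h : S.lam p.z q.w = 0) (hT : q.IsOrtho T)
    (hpT : S.lam p.z T.w = 0) : (q.orthProj p h).IsOrtho T where
  lam_z_w := by simp [HyperbolicPair.orthProj, hT.lam_z_w, hpT]
  lam_w_z := by rw [lam_orthProj_w, hT.lam_w_z]
  mu_w_w := by simp [HyperbolicPair.orthProj, S.mu_tau, hT.mu_w_w, hpT]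

lemma IsOrtho.orthProj_orthProj {q r p : HyperbolicPair S} (hq : S.lam p.z q.w = 0)
    (hr : S.lam p.z r.w = 0) (h : q.IsOrtho r) : (q.orthProj p hq).IsOrtho (r.orthProj p hr) :=
  (h.symm.orthProj hr hq).symm.orthProj hq (by rw [lam_orthProj_w, hr])

theorem exists_pairwise_orthogonal_to (p p₀ : HyperbolicPair S) (L₀ : List (HyperbolicPair S))
    (h : (p₀ :: L₀).Pairwise IsOrtho) :
    ∃ L : List (HyperbolicPair S), L.length = L₀.length ∧ L.Pairwise IsOrtho ∧
      p ∈ orthSet L ∧ orthSet (p₀ :: L₀) ∩ {T | S.lam p.z T.w = 0} ⊆ orthSet L := by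
  obtain ⟨_, L₁, hlen, hpw, hlam, hsub⟩ := exists_pairwise_lam_eq_zero p.z p₀ L₀ h
  refine ⟨L₁.pmap (fun q hq => q.orthProj p hq) hlam, by simp [hlen], ?_, ?_, ?_⟩
  · exact (pairwise_cons_iff.mp hpw).2.pmap hlam fun _ hq _ hr h => h.orthProj_orthProj hq hr
  · intro _ hq'
    obtain ⟨q, -, rfl⟩ := List.mem_pmap.mp hq'
    exact (isOrtho_orthProj_self _).symm
  · rintro T ⟨hT, hpT⟩ _ hq'
    obtain ⟨q, hq, rfl⟩ := List.mem_pmap.mp hq'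
    exact (((mem_orthSet_cons.mp (hsub hT)).2 q hq).symm.orthProj _ hpT).symm

theorem exists_pairwise_orthogonal_to_list (L : List (HyperbolicPair S))
    (hL : L.Pairwise IsOrtho) (c : List (HyperbolicPair S)) (hc : c.Pairwise IsOrtho)
    (hlen : L.length ≤ c.length) :
    ∃ c' : List (HyperbolicPair S), c'.length + L.length = c.length ∧ c'.Pairwise IsOrtho ∧
      (∀ p ∈ L, p ∈ orthSet c') ∧
      orthSet c ∩ {T | ∀ p ∈ L, S.lam p.z T.w = 0} ⊆ orthSet c' := by
  induction L generalizing c with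
  | nil => exact ⟨c, rfl, hc, by simp, Set.inter_subset_left⟩
  | cons p L ih =>
    obtain ⟨hpL, hL⟩ := pairwise_cons_iff.mp hL
    obtain ⟨p₀, L₀, rfl⟩ := List.exists_cons_of_length_pos
      (show 0 < c.length by simp at hlen; omega)
    obtain ⟨c₁, hlen₁, hc₁, hpc₁, hsub₁⟩ := exists_pairwise_orthogonal_to p p₀ L₀ hc
    obtain ⟨c', hlen', hc', hLc', hsub'⟩ := ih hL c₁ hc₁ (by simp at hlen; omega)
    refine ⟨c', by simp; omega, hc', ?_, ?_⟩
    · simp only [List.mem_cons, forall_eq_or_imp]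
      exact ⟨hsub' ⟨hpc₁, fun r hr => (hpL r hr).lam_w_z⟩, hLc'⟩
    · rintro T ⟨hT, hTL⟩
      simp only [List.mem_cons, forall_eq_or_imp, Set.mem_ofPred_eq] at hTL
      exact hsub' ⟨hsub₁ ⟨hT, hTL.1⟩, hTL.2⟩

theorem exists_orthogonal_path (L : List (HyperbolicPair S)) (p p' : HyperbolicPair S)
    (hL : (p :: L).Pairwise IsOrtho) (hp' : p' ∈ orthSet L) (c : List (HyperbolicPair S))
    (hc : c.Pairwise IsOrtho) (hlen : L.length + 4 ≤ c.length) :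
    ∃ q q' : HyperbolicPair S, q ∈ orthSet (p :: L) ∧ q' ∈ orthSet (p' :: q :: L) := by
  obtain ⟨F, hFlen, hF, hpLF, -⟩ :=
    exists_pairwise_orthogonal_to_list (p :: L) hL c hc (by simp; omega)
  obtain ⟨p₀, F₀, rfl⟩ := List.exists_cons_of_length_pos
    (show 0 < F.length by simp at hFlen; omega)
  obtain ⟨_, F₁, hlen₁, hF₁, hlam, hsub⟩ := exists_pairwise_lam_eq_zero p'.z p₀ F₀ hF
  -- Of the three pairs left, Euclid against `p'.z` uses up one; the others give `q` and `q'`.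
  obtain _ | ⟨q, _ | ⟨r, R⟩⟩ := F₁
  all_goals try simp at hlen₁ hFlen; omega
  have hqr : q.IsOrtho r := by simp_all [List.pairwise_cons]
  have hpLF₁ : ∀ t ∈ p :: L, t.IsOrtho q ∧ t.IsOrtho r := fun t ht => by
    have := hsub (hpLF t ht); simp_all
  have hpq : S.lam p'.z q.w = 0 := hlam q (by simp)
  have hpr : S.lam p'.z r.w = 0 := hlam r (by simp)
  refine ⟨q, r.orthProj p' hpr, fun t ht => (hpLF₁ t ht).1.symm, ?_⟩
  simp only [mem_orthSet_cons]
  refine ⟨isOrtho_orthProj_self hpr, hqr.symm.orthProj hpr hpq, fun t ht => ?_⟩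
  exact (hpLF₁ t (by simp [ht])).2.symm.orthProj hpr (hp' t ht).lam_z_w

end Projection

end HyperbolicPair

section StdWall

variable {H : Type} [AddCommGroup H] {P : FormParameter H} [AddGroup.FG H] {g : ℕ}

def HyperbolicPair.std (i : Fin g) : HyperbolicPair (stdWall P g).str where
  z := stdA i
  w := stdB i
  lam_z_w := by simp [stdA, stdB, Pi.single_apply]
  mu_w_w := by simp [stdB]
  alphaNeg_z := rfl
  alphaPos_w := by simp [stdB]

lemma HyperbolicPair.isOrtho_std {i j : Fin g} (hij : i ≠ j) :
    (HyperbolicPair.std (P := P) i).IsOrtho (HyperbolicPair.std j) where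
  lam_z_w := by simp [std, stdA, stdB, Pi.single_apply, hij.symm]
  lam_w_z := by simp [std, stdA, stdB, Pi.single_apply, hij]
  mu_w_w := by simp [std, stdB]

end StdWall

section Sum

variable {H : Type} [AddCommGroup H] {P : FormParameter H} (M N : WallForm P)

lemma isWallHom_inl : IsWallHom M.str (M.sum N).str (HPairHom.inl M.carrier N.carrier) :=
  ⟨fun x y => by simp [HPairHom.inl], fun y y' => by simp [HPairHom.inl],
    fun x => by simp [HPairHom.inl], fun y => by simp [HPairHom.inl, N.str.alphaPos_zero]⟩

lemma isWallHom_inr : IsWallHom N.str (M.sum N).str (HPairHom.inr M.carrier N.carrier) :=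
  ⟨fun x y => by simp [HPairHom.inr], fun y y' => by simp [HPairHom.inr],
    fun x => by simp [HPairHom.inr], fun y => by simp [HPairHom.inr, M.str.alphaPos_zero]⟩

end Sum

namespace HyperbolicPair

variable {H : Type} [AddCommGroup H] {P : FormParameter H}

lemma isOrtho_map_inl_map_inr {M N : WallForm P} (p : HyperbolicPair M.str)
    (q : HyperbolicPair N.str) :
    (p.map _ (isWallHom_inl M N)).IsOrtho (q.map _ (isWallHom_inr M N)) where
  lam_z_w := by simp [map, HPairHom.inl, HPairHom.inr]
  lam_w_z := by simp [map, HPairHom.inl, HPairHom.inr]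
  mu_w_w := by simp [map, HPairHom.inl, HPairHom.inr]

lemma exists_eq_map_inl [AddGroup.FG H] {M : WallForm P} {j : ℕ}
    (p : HyperbolicPair (M.sum (stdWall P j)).str)
    (hp : ∀ t, p.IsOrtho ((std t).map _ (isWallHom_inr M (stdWall P j)))) :
    ∃ p₀ : HyperbolicPair M.str, p = p₀.map _ (isWallHom_inl M (stdWall P j)) := by
  have hz (t : Fin j) : p.z.2 t = 0 := by
    simpa [map, std, stdB, HPairHom.inr, Pi.single_apply] using (hp t).lam_z_w
  have hw₁ (t : Fin j) : p.w.2.1 t = 0 := by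
    simpa [map, std, stdA, HPairHom.inr, Pi.single_apply] using (hp t).lam_w_z
  have hw₂ (t : Fin j) : p.w.2.2 t = 0 := by
    simpa [map, std, stdB, HPairHom.inr, Pi.single_apply] using (hp t).mu_w_w
  exact exists_eq_map _ p (z := p.z.1) (w := p.w.1) (Prod.ext rfl (funext hz))
    (Prod.ext rfl (Prod.ext (funext hw₁) (funext hw₂)))

end HyperbolicPair

section Vertices

variable {H : Type} [AddCommGroup H] [AddGroup.FG H] {P : FormParameter H} {M : WallForm P}

open HyperbolicPair

def WallHom.toHyperbolicPair (f : WallHom (stdWall P 1) M) : HyperbolicPair M.str :=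
  (std 0).map f.hom f.isWall

def HyperbolicPair.toWallHom (p : HyperbolicPair M.str) : WallHom (stdWall P 1) M where
  hom :=
    { neg := (zmultiplesHom _ p.z).comp (Pi.evalAddMonoidHom (fun _ => ℤ) 0)
      pos := (zmultiplesHom _ p.w).comp ((Pi.evalAddMonoidHom _ 0).comp (AddMonoidHom.fst _ _)) +
        (M.carrier.tau p.z).comp ((Pi.evalAddMonoidHom _ 0).comp (AddMonoidHom.snd _ _))
      comm := fun x h => by simp }
  isWall := by
    refine ⟨fun x y => ?_, fun y y' => ?_, fun x => ?_, fun y => ?_⟩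
    · simp [lam_z_add_tau, p.lam_z_w, mul_comm]
    · simp [p.mu_w_w, M.str.mu_tau, M.str.mu_tau_right, M.str.lam_tau, p.lam_z_w, add_comm,
        smul_comm (y.1 0) P.eps]
    · simp [p.alphaNeg_z]
    · have hμ : M.str.mu p.w (M.carrier.tau p.z (y.2 0)) = P.eps • y.2 0 := by
        rw [M.str.mu_tau_right, p.lam_z_w, one_smul]
      simp [M.str.alphaPos_add, hμ, P.bd_eps, M.str.alphaPos_zsmul_of_mu_self_eq_zero_s17 p.mu_w_w,
        p.alphaPos_w, M.str.alphaPos_tau_of_alphaNeg_eq_zero p.alphaNeg_z]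

@[simp] lemma HyperbolicPair.toHyperbolicPair_toWallHom (p : HyperbolicPair M.str) :
    p.toWallHom.toHyperbolicPair = p := by
  ext <;> simp [WallHom.toHyperbolicPair, map, std, stdA, stdB, toWallHom]

namespace WallHom

lemma exists_of_mem_rangeSub_neg (f : WallHom (stdWall P 1) M) {u : M.carrier.Neg}
    (hu : u ∈ f.hom.rangeSub.neg) : ∃ a : ℤ, u = a • f.toHyperbolicPair.z := by
  obtain ⟨x, rfl⟩ := hu
  have hx : x = x 0 • stdA 0 := by
    funext i; rw [Fin.fin_one_eq_zero i]; simp [stdA]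
  refine ⟨x 0, ?_⟩
  conv_lhs => rw [hx]
  exact map_zsmul _ _ _

lemma exists_of_mem_rangeSub_pos (f : WallHom (stdWall P 1) M) {u : M.carrier.Pos}
    (hu : u ∈ f.hom.rangeSub.pos) :
    ∃ (a : ℤ) (k : H), u = a • f.toHyperbolicPair.w + M.carrier.tau f.toHyperbolicPair.z k := by
  obtain ⟨y, rfl⟩ := hu
  have hy : y = y.1 0 • stdB 0 + (stdWall P 1).carrier.tau (stdA 0) (y.2 0) := by
    ext i <;> rw [Fin.fin_one_eq_zero i] <;> simp [stdA, stdB]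
  refine ⟨y.1 0, y.2 0, ?_⟩
  conv_lhs => rw [hy]
  rw [map_add, map_zsmul, f.hom.comm]
  rfl

lemma rangeSub_le_perp {f f' : WallHom (stdWall P 1) M}
    (h : f.toHyperbolicPair.IsOrtho f'.toHyperbolicPair) :
    f.hom.rangeSub.neg ≤ (f'.hom.rangeSub.perp M.str).neg ∧
      f.hom.rangeSub.pos ≤ (f'.hom.rangeSub.perp M.str).pos := by
  refine ⟨fun u hu w hw => ?_, fun u hu => ⟨fun v hv => ?_, fun w hw => ?_⟩⟩
  · obtain ⟨a, rfl⟩ := f.exists_of_mem_rangeSub_neg hu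
    obtain ⟨b, k, rfl⟩ := f'.exists_of_mem_rangeSub_pos hw
    simp [lam_z_add_tau, h.lam_z_w]
  · obtain ⟨a, k, rfl⟩ := f.exists_of_mem_rangeSub_pos hu
    obtain ⟨b, rfl⟩ := f'.exists_of_mem_rangeSub_neg hv
    simp [lam_z_add_tau, h.lam_w_z]
  · obtain ⟨a, k, rfl⟩ := f.exists_of_mem_rangeSub_pos hu
    obtain ⟨b, l, rfl⟩ := f'.exists_of_mem_rangeSub_pos hw
    exact h.mu_add_tau a b k l

lemma rangeSub_neg_inf_perp (f : WallHom (stdWall P 1) M) :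
    f.hom.rangeSub.neg ⊓ (f.hom.rangeSub.perp M.str).neg = ⊥ := by
  refine eq_bot_iff.mpr fun u ⟨hu, hperp⟩ => ?_
  obtain ⟨a, rfl⟩ := f.exists_of_mem_rangeSub_neg hu
  have := hperp f.toHyperbolicPair.w ⟨stdB 0, rfl⟩
  simp_all [f.toHyperbolicPair.lam_z_w]

lemma rangeSub_pos_inf_perp (f : WallHom (stdWall P 1) M) :
    f.hom.rangeSub.pos ⊓ (f.hom.rangeSub.perp M.str).pos = ⊥ := by
  refine eq_bot_iff.mpr fun u ⟨hu, hperp⟩ => ?_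
  obtain ⟨a, k, rfl⟩ := f.exists_of_mem_rangeSub_pos hu
  have ha := hperp.1 f.toHyperbolicPair.z ⟨stdA 0, rfl⟩
  rw [lam_z_add_tau, f.toHyperbolicPair.lam_z_w, mul_one] at ha
  have hk := hperp.2 f.toHyperbolicPair.w ⟨stdB 0, rfl⟩
  simp_all [M.str.mu_tau, f.toHyperbolicPair.lam_z_w]

lemma orthogonalIn_rangeSub {f f' : WallHom (stdWall P 1) M}
    (h : f.toHyperbolicPair.IsOrtho f'.toHyperbolicPair) :
    OrthogonalIn M.str f.hom.rangeSub f'.hom.rangeSub := by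
  obtain ⟨h₁, h₂⟩ := rangeSub_le_perp h
  obtain ⟨h₃, h₄⟩ := rangeSub_le_perp h.symm
  refine ⟨eq_bot_iff.mpr ?_, eq_bot_iff.mpr ?_, h₁, h₂, h₃, h₄⟩
  · exact f.rangeSub_neg_inf_perp ▸ inf_le_inf_left _ h₃
  · exact f.rangeSub_pos_inf_perp ▸ inf_le_inf_left _ h₄

end WallHom

lemma HyperbolicPair.pairwise_ofFn_map_std {g : ℕ} {D : HPair H} {T : WallAux P D}
    {φ : HPairHom (stdWall P g).carrier D} (hφ : IsWallHom (stdWall P g).str T φ) :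
    (List.ofFn fun i => (std i).map φ hφ).Pairwise IsOrtho :=
  List.pairwise_ofFn.mpr fun _ _ hij => (isOrtho_map_iff hφ).mpr (isOrtho_std hij.ne)

theorem reflTransGen_orthogonalIn_of_wallHom {g j : ℕ}
    (φ : WallHom (stdWall P g) (M.sum (stdWall P j))) (hgj : j + 4 ≤ g)
    (f f' : WallHom (stdWall P 1) M) :
    Relation.ReflTransGen
      (fun a b : WallHom (stdWall P 1) M =>
        OrthogonalIn M.str a.hom.rangeSub b.hom.rangeSub) f f' := by
  set L := List.ofFn fun t => (std t).map _ (isWallHom_inr M (stdWall P j))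
  have hL (q : HyperbolicPair M.str) : q.map _ (isWallHom_inl M (stdWall P j)) ∈ orthSet L :=
    fun r hr => by
      obtain ⟨t, rfl⟩ := List.mem_ofFn.mp hr
      exact isOrtho_map_inl_map_inr q _
  obtain ⟨q, q', hq, hq'⟩ := exists_orthogonal_path L _ _
    (pairwise_cons_iff.mpr ⟨hL f.toHyperbolicPair, pairwise_ofFn_map_std _⟩)
    (hL f'.toHyperbolicPair) _ (pairwise_ofFn_map_std φ.isWall) (by simpa [L] using hgj)
  obtain ⟨q₀, rfl⟩ := exists_eq_map_inl q fun t => (mem_orthSet_cons.mp hq).2 _ (by simp [L])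
  obtain ⟨q₀', rfl⟩ := exists_eq_map_inl q' fun t =>
    (mem_orthSet_cons.mp (mem_orthSet_cons.mp hq').2).2 _ (by simp [L])
  simp only [mem_orthSet_cons, isOrtho_map_iff] at hq hq'
  refine .head (WallHom.orthogonalIn_rangeSub (f' := q₀.toWallHom) ?_) <|
    .head (WallHom.orthogonalIn_rangeSub (f' := q₀'.toWallHom) ?_) <|
    .single (WallHom.orthogonalIn_rangeSub ?_)
  · simpa using hq.1.symm
  · simpa using hq'.2.1.symm
  · simpa using hq'.1

end Vertices

/-- If `r̄(M) ≥ 4 + d(H)` then the complex `L(M)` is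
connected: any two morphisms `W → M` are joined by a finite chain of
morphisms in which consecutive ones have orthogonal images. -/
theorem statement_17 {H : Type} [AddCommGroup H] [AddGroup.FG H]
    (P : FormParameter H) (M : WallForm P) (h : srankGE M (4 + dlen H))
    (f f' : WallHom (stdWall P 1) M) :
    Relation.ReflTransGen
      (fun a b : WallHom (stdWall P 1) M =>
        OrthogonalIn M.str a.hom.rangeSub b.hom.rangeSub) f f' := by
  obtain ⟨j, ⟨φ⟩⟩ := h
  exact reflTransGen_orthogonalIn_of_wallHom φ (by omega) f f'
end

section
/- Let M be a Wall form with r(M) ≥ 4 + d, where d = d(H). Then for any two Wall form morphisms h, h₀ : W → M there exists a morphism h' : W → M such that the image of h' is orthogonal to the image of h and also orthogonal to the image of h₀ (i.e., h and h₀ are joined by an edge path of length 2 in L(M)). -/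
/-!
Let `F : W^g → M` with `g = 4 + d(H)` and let `(aₕ, bₕ)`, `(a₀, b₀)` be the images of `(a₁, b₁)`
under `h` and `h₀`. For `X, Y ∈ ℤ^g` with `X ⬝ Y = 1`, the pair
`a = F(X) - λ(F(X), bₕ) aₕ`, `b = F(Y, 0) + τ(aₕ, -μ(F(Y, 0), bₕ))` spans a copy of `W`
orthogonal to `h`. It is orthogonal to `h₀` as well once `X` satisfies one linear condition and
`Y` satisfies `2 + d(H)` of them (the `H`-valued one is lifted along `ℤ^{d(H)} ↠ H`). The
solutions `Y` form a direct summand of `ℤ^g` of rank at least `2`, and a dual pair in it solves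
`X ⬝ Y = 1` against the condition on `X` by a gcd argument.
-/

section Lattice

variable {V : Type*} [AddCommGroup V]

theorem exists_dual_pair_in_ker [Module.Free ℤ V] [Module.Finite ℤ V]
    {N : Type*} [AddCommGroup N] [Module.Free ℤ N] [Module.Finite ℤ N]
    (ψ : V →ₗ[ℤ] N) (hrank : Module.finrank ℤ N + 2 ≤ Module.finrank ℤ V) :
    ∃ e₀ ∈ LinearMap.ker ψ, ∃ e₁ ∈ LinearMap.ker ψ, ∃ c₀ c₁ : Module.Dual ℤ V,
      c₀ e₀ = 1 ∧ c₀ e₁ = 0 ∧ c₁ e₀ = 0 ∧ c₁ e₁ = 1 := by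
  set K := LinearMap.ker ψ
  obtain ⟨σ, hσ⟩ := Module.projective_lifting_property ψ.rangeRestrict LinearMap.id
    ψ.surjective_rangeRestrict
  have hσ' : ∀ v, ψ (σ (ψ.rangeRestrict v)) = ψ v := fun v =>
    congrArg Subtype.val (LinearMap.congr_fun hσ (ψ.rangeRestrict v))
  let π : V →ₗ[ℤ] K := (LinearMap.id - σ ∘ₗ ψ.rangeRestrict).codRestrict K fun v => by
    simp [K, hσ']
  have hπ : ∀ k : K, π k = k := fun k => by
    have hk : ψ.rangeRestrict k = 0 := Subtype.ext k.2
    ext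
    simp [π, hk]
  have hK : 1 < Module.finrank ℤ K := by
    have := K.finrank_quotient_add_finrank
    rw [ψ.quotKerEquivRange.finrank_eq] at this
    have := ψ.range.finrank_le
    omega
  let b := Module.Free.chooseBasis ℤ K
  obtain ⟨i₀, i₁, hi⟩ := Fintype.one_lt_card_iff.mp (by rwa [← Module.finrank_eq_card_basis b])
  refine ⟨b i₀, (b i₀).2, b i₁, (b i₁).2, (b.coord i₀).comp π, (b.coord i₁).comp π, ?_⟩
  simp [hπ, hi, hi.symm]

theorem exists_pairing_eq_one {W : Type*} [AddCommGroup W]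
    (B : V →ₗ[ℤ] W →ₗ[ℤ] ℤ) (ℓ : V →ₗ[ℤ] ℤ) (K : Submodule ℤ W) {x₀ x₁ : V} {e₀ e₁ : W}
    (he₀ : e₀ ∈ K) (he₁ : e₁ ∈ K) (h₀₀ : B x₀ e₀ = 1) (h₀₁ : B x₀ e₁ = 0)
    (h₁₀ : B x₁ e₀ = 0) (h₁₁ : B x₁ e₁ = 1) :
    ∃ X, ∃ Y ∈ K, ℓ X = 0 ∧ B X Y = 1 := by
  by_cases hG : Int.gcd (ℓ x₀) (ℓ x₁) = 0
  · exact ⟨x₀, e₀, he₀, (Int.gcd_eq_zero_iff.mp hG).1, h₀₀⟩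
  obtain ⟨G, m, n, -, hmn, hm, hn⟩ := Int.exists_gcd_one' (Nat.pos_of_ne_zero hG)
  obtain ⟨p, q, hpq⟩ := Int.isCoprime_iff_gcd_eq_one.mpr hmn
  refine ⟨n • x₀ - m • x₁, q • e₀ - p • e₁,
    K.sub_mem (K.smul_mem q he₀) (K.smul_mem p he₁), ?_, ?_⟩
  · simp only [map_sub, map_zsmul, smul_eq_mul, hm, hn]
    ring
  · simp only [map_sub, map_zsmul, LinearMap.sub_apply, LinearMap.smul_apply, h₀₀, h₀₁, h₁₀, h₁₁,
      smul_eq_mul]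
    linear_combination hpq

theorem exists_dotProduct_eq_one {g : ℕ} {N : Type*} [AddCommGroup N] [Module.Free ℤ N]
    [Module.Finite ℤ N] (ψ : (Fin g → ℤ) →ₗ[ℤ] N) (hg : Module.finrank ℤ N + 2 ≤ g)
    (ℓ : (Fin g → ℤ) →ₗ[ℤ] ℤ) :
    ∃ X Y : Fin g → ℤ, ℓ X = 0 ∧ ψ Y = 0 ∧ X ⬝ᵥ Y = 1 := by
  obtain ⟨e₀, he₀, e₁, he₁, c₀, c₁, h₀₀, h₀₁, h₁₀, h₁₁⟩ :=
    exists_dual_pair_in_ker ψ (by rwa [Module.finrank_fin_fun])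
  have hvec : ∀ (c : Module.Dual ℤ (Fin g → ℤ)) y, (fun i => c (Pi.single i 1)) ⬝ᵥ y = c y := by
    intro c y
    conv_rhs => rw [pi_eq_sum_univ' y]
    simp only [map_sum, map_smul, smul_eq_mul, dotProduct, mul_comm]
  obtain ⟨X, Y, hY, hX, hXY⟩ := exists_pairing_eq_one (dotProductBilin ℤ ℤ) ℓ (LinearMap.ker ψ)
    he₀ he₁ (x₀ := fun i => c₀ (Pi.single i 1)) (x₁ := fun i => c₁ (Pi.single i 1))
    (by simpa [hvec]) (by simpa [hvec]) (by simpa [hvec]) (by simpa [hvec])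
  exact ⟨X, Y, hX, hY, by simpa using hXY⟩

end Lattice

theorem exists_surjective_dlen (H : Type) [AddCommGroup H] [AddGroup.FG H] :
    ∃ s : (Fin (dlen H) → ℤ) →+ H, Function.Surjective s := by
  have : Module.Finite ℤ H := Module.Finite.iff_addGroup_fg.mpr ‹_›
  obtain ⟨n, s, hs⟩ := Module.Finite.exists_fin' ℤ H
  exact Nat.sInf_mem (s := {k | ∃ s : (Fin k → ℤ) →+ H, Function.Surjective s})
    ⟨n, s.toAddMonoidHom, hs⟩

namespace WallAux

variable {H : Type} [AddCommGroup H] {P : FormParameter H} {C : HPair H} (S : WallAux P C)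

theorem alphaPos_zsmul_eq_zero {y : C.Pos} (hy : S.alphaPos y = 0) (hyy : S.mu y y = 0) (n : ℤ) :
    S.alphaPos (n • y) = 0 := by
  let α : ℤ →+ P.G.Pos := AddMonoidHom.mk' (fun n => S.alphaPos (n • y)) fun m n => by
    simp only [add_smul, S.alphaPos_add, map_zsmul, AddMonoidHom.smul_apply, hyy, smul_zero,
      map_zero, add_zero]
  have : α = 0 := AddMonoidHom.ext_int (by simp [α, hy])
  exact DFunLike.congr_fun this n

end WallAux

section StdWall

variable {H : Type} [AddCommGroup H] [AddGroup.FG H] {P : FormParameter H} {g : ℕ}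

@[simp] theorem stdWall_lam_apply (x : Fin g → ℤ) (w : (Fin g → ℤ) × (Fin g → H)) :
    (stdWall P g).str.lam x w = ∑ i, x i * w.1 i := rfl

@[simp] theorem stdWall_alphaPos_apply (w : (Fin g → ℤ) × (Fin g → H)) :
    (stdWall P g).str.alphaPos w = P.bd (∑ i, w.1 i • w.2 i) := rfl

end StdWall

namespace WallHom

variable {H : Type} [AddCommGroup H] [AddGroup.FG H] {P : FormParameter H} {M : WallForm P}

def aElt (f : WallHom (stdWall P 1) M) : M.carrier.Neg :=
  f.hom.neg (fun _ => 1)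

def bElt (f : WallHom (stdWall P 1) M) : M.carrier.Pos :=
  f.hom.pos (fun _ => 1, 0)

variable (f : WallHom (stdWall P 1) M)

theorem neg_apply (z : (stdWall P 1).carrier.Neg) : f.hom.neg z = z 0 • f.aElt := by
  have hz : @Eq (Fin 1 → ℤ) z (z 0 • fun _ => 1) := by
    ext i
    simp [Subsingleton.elim i 0]
  exact (congrArg f.hom.neg hz).trans (map_zsmul f.hom.neg (z 0) _)

theorem pos_apply (w : (stdWall P 1).carrier.Pos) :
    f.hom.pos w = w.1 0 • f.bElt + M.carrier.tau f.aElt (w.2 0) := by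
  have hw : @Eq ((Fin 1 → ℤ) × (Fin 1 → H)) w
      (w.1 0 • (fun _ => 1, 0) + (stdPair H 1).tau (fun _ => 1) (w.2 0)) := by
    ext i <;> simp [Subsingleton.elim i 0]
  refine (congrArg f.hom.pos hw).trans ((map_add f.hom.pos _ _).trans ?_)
  exact congrArg₂ (· + ·) (map_zsmul f.hom.pos _ _) (f.hom.comm _ _)

theorem aElt_mem_range : f.aElt ∈ f.hom.neg.range := ⟨_, rfl⟩

theorem bElt_mem_range : f.bElt ∈ f.hom.pos.range := ⟨_, rfl⟩

theorem alphaNeg_aElt : M.str.alphaNeg f.aElt = 0 := f.isWall.2.2.1 _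

theorem lam_aElt_bElt : M.str.lam f.aElt f.bElt = 1 := by
  have h := f.isWall.1 (fun _ => 1) (fun _ => 1, 0)
  rw [stdWall_lam_apply] at h
  simpa [aElt, bElt] using h

variable (f₁ f₂ : WallHom (stdWall P 1) M)

theorem lam_eq_zero_of_mem_range (h₁₂ : M.str.lam f₁.aElt f₂.bElt = 0) {z : M.carrier.Neg}
    (hz : z ∈ f₁.hom.neg.range) {w : M.carrier.Pos} (hw : w ∈ f₂.hom.pos.range) :
    M.str.lam z w = 0 := by
  obtain ⟨p, rfl⟩ := hz
  obtain ⟨q, rfl⟩ := hw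
  simp [f₁.neg_apply, f₂.pos_apply, M.str.lam_tau, h₁₂]

theorem mu_eq_zero_of_mem_range (h₁₂ : M.str.lam f₁.aElt f₂.bElt = 0)
    (h₂₁ : M.str.lam f₂.aElt f₁.bElt = 0) (hμ : M.str.mu f₁.bElt f₂.bElt = 0)
    {z : M.carrier.Pos} (hz : z ∈ f₁.hom.pos.range) {w : M.carrier.Pos}
    (hw : w ∈ f₂.hom.pos.range) : M.str.mu z w = 0 := by
  obtain ⟨p, rfl⟩ := hz
  obtain ⟨q, rfl⟩ := hw
  have hμτ : M.str.mu f₁.bElt (M.carrier.tau f₂.aElt (q.2 0)) = 0 := by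
    rw [M.str.mu_symm, M.str.mu_tau, h₂₁, zero_smul, smul_zero]
  simp [f₁.pos_apply, f₂.pos_apply, M.str.mu_tau, M.str.lam_tau, h₁₂, hμ, hμτ]

theorem neg_range_inf_eq_bot (h₂₁ : M.str.lam f₂.aElt f₁.bElt = 0) :
    f₁.hom.neg.range ⊓ f₂.hom.neg.range = ⊥ := by
  refine (AddSubgroup.eq_bot_iff_forall _).mpr ?_
  rintro _ ⟨⟨p, rfl⟩, hp₂⟩
  have hp : p 0 = 0 := by
    simpa [f₁.neg_apply, f₁.lam_aElt_bElt] using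
      f₂.lam_eq_zero_of_mem_range f₁ h₂₁ hp₂ f₁.bElt_mem_range
  simp [f₁.neg_apply, hp]

theorem pos_range_inf_eq_bot (h₁₂ : M.str.lam f₁.aElt f₂.bElt = 0)
    (h₂₁ : M.str.lam f₂.aElt f₁.bElt = 0) (hμ : M.str.mu f₂.bElt f₁.bElt = 0) :
    f₁.hom.pos.range ⊓ f₂.hom.pos.range = ⊥ := by
  refine (AddSubgroup.eq_bot_iff_forall _).mpr ?_
  rintro _ ⟨⟨p, rfl⟩, hp₂⟩
  have hp₁ : p.1 0 = 0 := by
    have := f₁.lam_eq_zero_of_mem_range f₂ h₁₂ f₁.aElt_mem_range hp₂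
    simpa [f₁.pos_apply, M.str.lam_tau, f₁.lam_aElt_bElt] using this
  have hp₂' : p.2 0 = 0 := by
    have := f₂.mu_eq_zero_of_mem_range f₁ h₂₁ h₁₂ hμ hp₂ f₁.bElt_mem_range
    simpa [f₁.pos_apply, hp₁, M.str.mu_tau, f₁.lam_aElt_bElt] using this
  simp [f₁.pos_apply, hp₁, hp₂']

theorem orthogonalIn_rangeSub_s18 (h₁₂ : M.str.lam f₁.aElt f₂.bElt = 0)
    (h₂₁ : M.str.lam f₂.aElt f₁.bElt = 0) (hμ : M.str.mu f₁.bElt f₂.bElt = 0) :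
    OrthogonalIn M.str f₁.hom.rangeSub f₂.hom.rangeSub := by
  have hμ' : M.str.mu f₂.bElt f₁.bElt = 0 := by rw [M.str.mu_symm, hμ, smul_zero]
  exact ⟨f₁.neg_range_inf_eq_bot f₂ h₂₁, f₁.pos_range_inf_eq_bot f₂ h₁₂ h₂₁ hμ',
    fun _ hz _ hw => f₁.lam_eq_zero_of_mem_range f₂ h₁₂ hz hw,
    fun _ hz => ⟨fun _ hv => f₂.lam_eq_zero_of_mem_range f₁ h₂₁ hv hz,
      fun _ hw => f₁.mu_eq_zero_of_mem_range f₂ h₁₂ h₂₁ hμ hz hw⟩,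
    fun _ hz _ hw => f₂.lam_eq_zero_of_mem_range f₁ h₂₁ hz hw,
    fun _ hz => ⟨fun _ hv => f₁.lam_eq_zero_of_mem_range f₂ h₁₂ hv hz,
      fun _ hw => f₂.mu_eq_zero_of_mem_range f₁ h₂₁ h₁₂ hμ' hz hw⟩⟩

end WallHom

section OfPair

variable {H : Type} [AddCommGroup H] [AddGroup.FG H] {P : FormParameter H} {M : WallForm P}

def stdOneHPairHom (a : M.carrier.Neg) (b : M.carrier.Pos) :
    HPairHom (stdWall P 1).carrier M.carrier where
  neg := (zmultiplesHom _ a).comp (Pi.evalAddMonoidHom (fun _ : Fin 1 => ℤ) 0)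
  pos := (zmultiplesHom _ b).comp ((Pi.evalAddMonoidHom (fun _ : Fin 1 => ℤ) 0).comp
      (AddMonoidHom.fst _ _)) +
    (M.carrier.tau a).comp ((Pi.evalAddMonoidHom (fun _ : Fin 1 => H) 0).comp
      (AddMonoidHom.snd _ _))
  comm x κ := by
    show (0 : ℤ) • b + M.carrier.tau a (x 0 • κ) = M.carrier.tau (x 0 • a) κ
    rw [zero_smul, zero_add, map_zsmul, map_zsmul, AddMonoidHom.smul_apply]

variable (a : M.carrier.Neg) (b : M.carrier.Pos)

@[simp] theorem stdOneHPairHom_neg (x : (stdWall P 1).carrier.Neg) :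
    (stdOneHPairHom a b).neg x = x 0 • a := rfl

@[simp] theorem stdOneHPairHom_pos (y : (stdWall P 1).carrier.Pos) :
    (stdOneHPairHom a b).pos y = y.1 0 • b + M.carrier.tau a (y.2 0) := rfl

theorem isWallHom_stdOneHPairHom (hab : M.str.lam a b = 1) (ha : M.str.alphaNeg a = 0)
    (hb : M.str.alphaPos b = 0) : IsWallHom (stdWall P 1).str M.str (stdOneHPairHom a b) := by
  have hbb : M.str.mu b b = 0 := by rw [M.str.mu_diag, hb, map_zero]
  have hbτ : ∀ κ, M.str.mu b (M.carrier.tau a κ) = P.eps • κ := fun κ => by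
    rw [M.str.mu_symm, M.str.mu_tau, hab, one_smul]
  refine ⟨fun x y => ?_, fun y y' => ?_, fun x => ?_, fun y => ?_⟩
  · show M.str.lam (x 0 • a) (y.1 0 • b + M.carrier.tau a (y.2 0)) = ∑ i, x i * y.1 i
    simp [M.str.lam_tau, hab, mul_comm]
  · show M.str.mu (y.1 0 • b + M.carrier.tau a (y.2 0)) (y'.1 0 • b + M.carrier.tau a (y'.2 0))
      = (∑ i, y'.1 i • y.2 i) + P.eps • ∑ i, y.1 i • y'.2 i
    simp [M.str.mu_tau, M.str.lam_tau, hab, hbb, hbτ, add_comm, smul_comm (y.1 0)]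
  · show M.str.alphaNeg (x 0 • a) = 0
    simp [ha]
  · show M.str.alphaPos (y.1 0 • b + M.carrier.tau a (y.2 0)) = P.bd (∑ i, y.1 i • y.2 i)
    simp only [Fin.sum_univ_one, M.str.alphaPos_add, M.str.alphaPos_zsmul_eq_zero hb hbb,
      M.str.alphaPos_tau, ha, map_zero, AddMonoidHom.zero_apply, map_zsmul,
      AddMonoidHom.smul_apply, hbτ, zero_add]
    simp only [← map_zsmul, P.bd_eps]

theorem exists_wallHom_aElt_bElt (hab : M.str.lam a b = 1) (ha : M.str.alphaNeg a = 0)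
    (hb : M.str.alphaPos b = 0) :
    ∃ f : WallHom (stdWall P 1) M, f.aElt = a ∧ f.bElt = b :=
  ⟨⟨stdOneHPairHom a b, isWallHom_stdOneHPairHom a b hab ha hb⟩,
    show (1 : ℤ) • a = a from one_smul _ a, show (1 : ℤ) • b + M.carrier.tau a 0 = b by simp⟩

end OfPair

section Construction

variable {H : Type} [AddCommGroup H] [AddGroup.FG H] {P : FormParameter H} {M : WallForm P}

theorem exists_orthogonal_wallHom {g : ℕ} (F : WallHom (stdWall P g) M)
    (f f₀ : WallHom (stdWall P 1) M) {X Y : Fin g → ℤ} (hXY : X ⬝ᵥ Y = 1)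
    (hX : M.str.lam (F.hom.neg X) (f₀.bElt - M.str.lam f.aElt f₀.bElt • f.bElt) = 0)
    (hY : M.str.lam f.aElt (F.hom.pos (Y, 0)) = 0)
    (hY₀ : M.str.lam f₀.aElt (F.hom.pos (Y, 0)) = 0)
    (hYμ : M.str.mu (F.hom.pos (Y, 0)) (f₀.bElt - M.str.lam f.aElt f₀.bElt • f.bElt) = 0) :
    ∃ f' : WallHom (stdWall P 1) M,
      OrthogonalIn M.str f'.hom.rangeSub f.hom.rangeSub ∧
      OrthogonalIn M.str f'.hom.rangeSub f₀.hom.rangeSub := by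
  set x := F.hom.neg X
  set y := F.hom.pos (Y, 0)
  have hxy : M.str.lam x y = 1 := (F.isWall.1 X (Y, 0)).trans hXY
  have hαx : M.str.alphaNeg x = 0 := F.isWall.2.2.1 X
  have hαy : M.str.alphaPos y = 0 := (F.isWall.2.2.2 (Y, 0)).trans (by simp)
  have hab := f.lam_aElt_bElt
  have hαa := f.alphaNeg_aElt
  set a := x - M.str.lam x f.bElt • f.aElt
  set b := y + M.carrier.tau f.aElt (-M.str.mu y f.bElt)
  have hlam_b : ∀ z, M.str.lam z b = M.str.lam z y := fun z => by simp [b, M.str.lam_tau]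
  have hμ_b : ∀ w, M.str.mu b w = M.str.mu y w - M.str.lam f.aElt w • M.str.mu y f.bElt :=
    fun w => by simp [b, M.str.mu_tau, sub_eq_add_neg]
  have hab' : M.str.lam a b = 1 := by simp [a, hlam_b, hxy, hY]
  have hαa' : M.str.alphaNeg a = 0 := by simp [a, hαx, hαa]
  have hαb' : M.str.alphaPos b = 0 := by
    have hyτ : M.str.mu y (M.carrier.tau f.aElt (-M.str.mu y f.bElt)) = 0 := by
      rw [M.str.mu_symm, M.str.mu_tau, hY, zero_smul, smul_zero]
    rw [M.str.alphaPos_add, hαy, M.str.alphaPos_tau, hαa, hyτ]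
    simp
  obtain ⟨f', ha', hb'⟩ := exists_wallHom_aElt_bElt a b hab' hαa' hαb'
  refine ⟨f', f'.orthogonalIn_rangeSub_s18 f ?_ ?_ ?_, f'.orthogonalIn_rangeSub_s18 f₀ ?_ ?_ ?_⟩
  · simp [ha', a, hab]
  · rw [hb', hlam_b, hY]
  · rw [hb', hμ_b, hab, one_smul, sub_self]
  · simpa [ha', a, mul_comm] using hX
  · rw [hb', hlam_b, hY₀]
  · simpa [hb', hμ_b] using hYμ

end Construction

/-- If `r(M) ≥ 4 + d(H)` then any two morphisms
`h, h₀ : W → M` admit a morphism `h' : W → M` whose image is orthogonal to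
the images of both, i.e. `h` and `h₀` are joined by a path of length 2 in
`L(M)`. -/
theorem statement_18 {H : Type} [AddCommGroup H] [AddGroup.FG H]
    (P : FormParameter H) (M : WallForm P) (hr : rankGE M (4 + dlen H))
    (h h₀ : WallHom (stdWall P 1) M) :
    ∃ h' : WallHom (stdWall P 1) M,
      OrthogonalIn M.str h'.hom.rangeSub h.hom.rangeSub ∧
      OrthogonalIn M.str h'.hom.rangeSub h₀.hom.rangeSub := by
  obtain ⟨F⟩ := hr
  obtain ⟨s, hs⟩ := exists_surjective_dlen H
  set b₀ := h₀.bElt - M.str.lam h.aElt h₀.bElt • h.bElt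
  let y : (Fin (4 + dlen H) → ℤ) →+ M.carrier.Pos := F.hom.pos.comp (AddMonoidHom.inl _ _)
  obtain ⟨L, hL⟩ := Module.projective_lifting_property s.toIntLinearMap
    ((M.str.mu.flip b₀).comp y).toIntLinearMap hs
  let ψ := ((M.str.lam h.aElt).comp y).toIntLinearMap.prod
    (((M.str.lam h₀.aElt).comp y).toIntLinearMap.prod L)
  obtain ⟨X, Y, hX, hY, hXY⟩ := exists_dotProduct_eq_one ψ (by simp; omega)
    ((M.str.lam.flip b₀).comp F.hom.neg).toIntLinearMap
  simp only [ψ, LinearMap.prod_apply, Function.prod, Prod.mk_eq_zero] at hY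
  obtain ⟨hYa, hYa₀, hYL⟩ := hY
  have hYμ : M.str.mu (y Y) b₀ = 0 := by
    simpa [hYL] using (LinearMap.congr_fun hL Y).symm
  exact exists_orthogonal_wallHom F h h₀ hXY hX hYa hYa₀ hYμ
end
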